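/- Let f, g be in B(X,P). Then f and g are Green's J-related in B(X,P) (there exist h1, h2, h3, h4 in B(X,P) with f = h1 g h2 and g = h3 f h4, using left-to-right composition) if and only if there exist bijections alpha, beta : I -> I such that |f(X_i)| <= |g(X_{alpha(i)})| and |g(X_i)| <= |f(X_{beta(i)})| (as cardinals) for all i in I. -/

import Mathlib

open Cardinal

/-- `P : I → Set X` is a partition of `X`: blocks are nonempty, pairwise disjoint,
and cover `X`. -/
def IsPartition {X I : Type*} (P : I → Set X) : Prop :=
  (∀ i, (P i).Nonempty) ∧ Pairwise (Function.onFun Disjoint P) ∧ ∀ x, ∃ i, x ∈ P i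

/-- `f` belongs to `B(X,P)` with character `χ`: `f` maps each block `P i` into the
block `P (χ i)`, and `χ` is a bijection of the index set. -/
def MemB {X I : Type*} (P : I → Set X) (f : X → X) (χ : I → I) : Prop :=
  (∀ i, Set.MapsTo f (P i) (P (χ i))) ∧ Function.Bijective χ

/-- Green's `L` relation on `B(X,P)` (left-to-right composition: `f = hg` means
`f x = g (h x)`). -/
def GreenL {X I : Type*} (P : I → Set X) (f g : X → X) : Prop :=
  ∃ h χh h' χh', MemB P h χh ∧ MemB P h' χh' ∧
    (∀ x, f x = g (h x)) ∧ (∀ x, g x = f (h' x))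

/-- Green's `R` relation on `B(X,P)` (`f = gh` means `f x = h (g x)`). -/
def GreenR {X I : Type*} (P : I → Set X) (f g : X → X) : Prop :=
  ∃ h χh h' χh', MemB P h χh ∧ MemB P h' χh' ∧
    (∀ x, f x = h (g x)) ∧ (∀ x, g x = h' (f x))

/-- Green's `D` relation on `B(X,P)`. -/
def GreenD {X I : Type*} (P : I → Set X) (f g : X → X) : Prop :=
  ∃ k χk, MemB P k χk ∧ GreenL P f k ∧ GreenR P k g

/-- Green's `J` relation on `B(X,P)` (`f = h₁ g h₂` means `f x = h₂ (g (h₁ x))`). -/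
def GreenJ {X I : Type*} (P : I → Set X) (f g : X → X) : Prop :=
  (∃ h1 χ1 h2 χ2, MemB P h1 χ1 ∧ MemB P h2 χ2 ∧ ∀ x, f x = h2 (g (h1 x))) ∧
  (∃ h3 χ3 h4 χ4, MemB P h3 χ3 ∧ MemB P h4 χ4 ∧ ∀ x, g x = h4 (f (h3 x)))


/-!
A factorization `f = h₁ g h₂` with `h₁` of character `χ₁` forces `f(P i) ⊆ h₂(g(P (χ₁ i)))`,
which gives the cardinal inequalities. Conversely, an injection `f(P i) ↪ g(P (α i))` lets
`h₁` send `x ∈ P i` to a preimage under `g`, in `P (α i)`, of the image of `f x`; then `g ∘ h₁`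
identifies no more points than `f`, so `f` extends along `g ∘ h₁` to some `h₂`, which can be
chosen to respect the blocks because the character of `g ∘ h₁` is bijective.
-/

open Function Set

universe u

lemma mk_image_le_of_eq_comp {α β : Type u} {f : α → β} {g : α → β} {h₁ : α → α}
    {h₂ : β → β} {s t : Set α} (hmaps : MapsTo h₁ s t) (hf : ∀ x ∈ s, f x = h₂ (g (h₁ x))) :
    #(f '' s) ≤ #(g '' t) := by
  have hsub : f '' s ⊆ h₂ '' (g '' t) := by
    rintro _ ⟨x, hx, rfl⟩
    exact ⟨g (h₁ x), mem_image_of_mem g (hmaps hx), (hf x hx).symm⟩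
  exact (mk_le_mk_of_subset hsub).trans mk_image_le

lemma exists_mapsTo_factorsThrough_of_mk_image_le {α β : Type u} {f g : α → β} {s t : Set α}
    (hle : #(f '' s) ≤ #(g '' t)) :
    ∃ k : α → α, MapsTo k s t ∧ ∀ x ∈ s, ∀ y ∈ s, g (k x) = g (k y) → f x = f y := by
  obtain ⟨ι⟩ := hle
  have hpre : ∀ x (hx : x ∈ s), ∃ z ∈ t, g z = ι ⟨f x, mem_image_of_mem f hx⟩ :=
    fun x _ => (ι _).2
  choose! k hkt hkg using hpre
  refine ⟨k, hkt, fun x hx y hy hxy => ?_⟩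
  exact congrArg Subtype.val
    (ι.injective (Subtype.ext ((hkg x hx).symm.trans (hxy.trans (hkg y hy)))))

lemma MemB.comp {X I : Type*} {P : I → Set X} {f g : X → X} {χf χg : I → I}
    (hf : MemB P f χf) (hg : MemB P g χg) : MemB P (g ∘ f) (χg ∘ χf) :=
  ⟨fun i => (hg.1 (χf i)).comp (hf.1 i), hg.2.comp hf.2⟩

namespace IsPartition

variable {X I : Type*} {P : I → Set X}

lemma eq_of_mem_of_mem (hP : IsPartition P) {x : X} {i j : I} (hi : x ∈ P i) (hj : x ∈ P j) :
    i = j := by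
  by_contra hij
  exact disjoint_left.mp (hP.2.1 hij) hi hj

lemma exists_memB_factorsThrough_of_mk_image_le (hP : IsPartition P) {f g : X → X}
    {χg α : I → I} (hg : MemB P g χg) (hα : Bijective α)
    (hle : ∀ i, #(f '' P i) ≤ #(g '' P (α i))) :
    ∃ h, MemB P h α ∧ FactorsThrough f (g ∘ h) := by
  choose k hk_maps hk_fac using fun i => exists_mapsTo_factorsThrough_of_mk_image_le (hle i)
  choose idx hidx using hP.2.2
  have idx_eq {x : X} {i : I} (hx : x ∈ P i) : idx x = i := hP.eq_of_mem_of_mem (hidx x) hx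
  refine ⟨fun x => k (idx x) x, ⟨fun i x hx => ?_, hα⟩, fun x y hxy => ?_⟩
  · simp only [idx_eq hx]
    exact hk_maps i hx
  · simp only [comp_apply] at hxy
    have hgx := hg.1 _ (hk_maps _ (hidx x))
    have hgy := hg.1 _ (hk_maps _ (hidx y))
    rw [← hxy] at hgy
    have hy : y ∈ P (idx x) := (hg.2.comp hα).injective (hP.eq_of_mem_of_mem hgy hgx) ▸ hidx y
    rw [idx_eq hy] at hxy
    exact hk_fac _ x (hidx x) y hy hxy

lemma exists_memB_eq_comp_of_factorsThrough (hP : IsPartition P) {f k : X → X} {χf χk : I → I}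
    (hf : MemB P f χf) (hk : MemB P k χk) (hfk : FactorsThrough f k) :
    ∃ h χ, MemB P h χ ∧ ∀ x, f x = h (k x) := by
  choose idx hidx using hP.2.2
  have idx_eq {x : X} {i : I} (hx : x ∈ P i) : idx x = i := hP.eq_of_mem_of_mem (hidx x) hx
  let e := Equiv.ofBijective χk hk.2
  let fallback : X → X := fun y => (hP.1 (χf (e.symm (idx y)))).some
  refine ⟨extend k f fallback, χf ∘ e.symm, ⟨fun j y hy => ?_, hf.2.comp e.symm.bijective⟩,
    fun x => (hfk.extend_apply fallback x).symm⟩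
  by_cases hrange : ∃ x, k x = y
  · obtain ⟨x, rfl⟩ := hrange
    have hj : χk (idx x) = j := hP.eq_of_mem_of_mem (hk.1 _ (hidx x)) hy
    rw [hfk.extend_apply, comp_apply, ← hj]
    exact hf.1 _ (by simpa [e] using hidx x)
  · rw [extend_apply' _ _ _ hrange, ← idx_eq hy]
    exact (hP.1 _).some_mem

lemma exists_eq_comp_comp_of_mk_image_le (hP : IsPartition P) {f g : X → X}
    {χf χg α : I → I} (hf : MemB P f χf) (hg : MemB P g χg) (hα : Bijective α)
    (hle : ∀ i, #(f '' P i) ≤ #(g '' P (α i))) :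
    ∃ h₁ χ₁ h₂ χ₂, MemB P h₁ χ₁ ∧ MemB P h₂ χ₂ ∧ ∀ x, f x = h₂ (g (h₁ x)) := by
  obtain ⟨h₁, hh₁, hfac⟩ := hP.exists_memB_factorsThrough_of_mk_image_le hg hα hle
  obtain ⟨h₂, χ₂, hh₂, hfg⟩ := hP.exists_memB_eq_comp_of_factorsThrough hf (hh₁.comp hg) hfac
  exact ⟨h₁, α, h₂, χ₂, hh₁, hh₂, hfg⟩

end IsPartition

theorem J_iff_general {X I : Type*} (P : I → Set X) (hP : IsPartition P)
    (f g : X → X) (χf χg : I → I) (hf : MemB P f χf) (hg : MemB P g χg) :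
    GreenJ P f g ↔
      ∃ α β : I → I, Function.Bijective α ∧ Function.Bijective β ∧
        ∀ i, Cardinal.mk ↥(f '' (P i)) ≤ Cardinal.mk ↥(g '' (P (α i))) ∧
          Cardinal.mk ↥(g '' (P i)) ≤ Cardinal.mk ↥(f '' (P (β i))) := by
  constructor
  · rintro ⟨⟨h₁, χ₁, h₂, -, hh₁, -, hfg⟩, ⟨h₃, χ₃, h₄, -, hh₃, -, hgf⟩⟩
    exact ⟨χ₁, χ₃, hh₁.2, hh₃.2, fun i =>
      ⟨mk_image_le_of_eq_comp (hh₁.1 i) fun x _ => hfg x,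
        mk_image_le_of_eq_comp (hh₃.1 i) fun x _ => hgf x⟩⟩
  · rintro ⟨α, β, hα, hβ, hle⟩
    exact ⟨hP.exists_eq_comp_comp_of_mk_image_le hf hg hα fun i => (hle i).1,
      hP.exists_eq_comp_comp_of_mk_image_le hg hf hβ fun i => (hle i).2⟩

/-- `f J g` in `B(X,P)` iff there are bijections `α, β` of `I` with
`|f '' (P i)| ≤ |g '' (P (α i))|` and `|g '' (P i)| ≤ |f '' (P (β i))|` for all `i`. -/
theorem J_iff {X I : Type*} [Nonempty X] (P : I → Set X) (hP : IsPartition P)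
    (f g : X → X) (χf χg : I → I) (hf : MemB P f χf) (hg : MemB P g χg) :
    GreenJ P f g ↔
      ∃ α β : I → I, Function.Bijective α ∧ Function.Bijective β ∧
        ∀ i, Cardinal.mk ↥(f '' (P i)) ≤ Cardinal.mk ↥(g '' (P (α i))) ∧
          Cardinal.mk ↥(g '' (P i)) ≤ Cardinal.mk ↥(f '' (P (β i))) :=
  J_iff_general P hP f g χf χg hf hg
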